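/- arXiv:0905.1185 — 7 statements merged into one kernel-verified Lean document; each statement's English description precedes it below -/
import Mathlib

section
/- For every finite group G, the number of group homomorphisms from the quaternion group Q₈ to G equals the number of pairs (g, h) ∈ G × G satisfying g⁻¹ * h * g * h = 1 and g * h⁻¹ * g * h = 1; that is, Nat.card (QuaternionGroup 2 →* G) = Nat.card {p : G × G | p.1⁻¹ * p.2 * p.1 * p.2 = 1 ∧ p.1 * p.2⁻¹ * p.1 * p.2 = 1}. -/
/-!
`QuaternionGroup n` has the presentation `⟨a, x | x² = aⁿ, a x = x a⁻¹⟩`, the relation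
`a²ⁿ = 1` being a consequence of the other two. Hence homomorphisms `QuaternionGroup n → G`
correspond to pairs `(g, h)` satisfying `h² = gⁿ` and `g h = h g⁻¹`. For `n = 2` these
relations are equivalent to `h g h = g` and `g h g = h`, which are the two relations of the
statement.
-/

section

variable {G : Type*} [Group G]

theorem zpow_cast_eq_zpow_of_intCast_eq {m : ℕ} {g : G} (hg : g ^ m = 1) {i : ZMod m} {k : ℤ}
    (hk : (k : ZMod m) = i) : g ^ (i.cast : ℤ) = g ^ k := by
  rw [zpow_eq_zpow_iff_modEq]
  refine Int.ModEq.of_dvd (Int.natCast_dvd_natCast.mpr (orderOf_dvd_of_pow_eq_one hg)) ?_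
  rw [← ZMod.intCast_eq_intCast_iff, ZMod.intCast_zmod_cast, hk]

theorem zpow_mul_eq_mul_zpow_neg {g h : G} (hgh : g * h = h * g⁻¹) (k : ℤ) :
    g ^ k * h = h * g ^ (-k) := by
  have : SemiconjBy h g⁻¹ g := hgh.symm
  simpa [inv_zpow'] using (this.zpow_right k).symm

theorem pow_two_mul_eq_one_of_sq_eq_pow {n : ℕ} {g h : G} (hsq : h ^ 2 = g ^ n)
    (hgh : g * h = h * g⁻¹) : g ^ (2 * n) = 1 := by
  have hcomm : g ^ (n : ℤ) * h = h * g ^ (n : ℤ) := by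
    rw [zpow_natCast, ← hsq, ← pow_succ, pow_succ']
  have hneg : g ^ (-(n : ℤ)) = g ^ (n : ℤ) :=
    mul_left_cancel ((zpow_mul_eq_mul_zpow_neg hgh n).symm.trans hcomm)
  rw [zpow_neg, zpow_natCast] at hneg
  rw [two_mul, pow_add]
  exact inv_eq_iff_mul_eq_one.mp hneg

theorem quaternion_relations_iff {g h : G} :
    (g⁻¹ * h * g * h = 1 ∧ g * h⁻¹ * g * h = 1) ↔ (h ^ 2 = g ^ 2 ∧ g * h = h * g⁻¹) := by
  constructor
  · rintro ⟨h₁, h₂⟩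
    have hgh : h * g * h = g :=
      calc h * g * h = g * (g⁻¹ * h * g * h) := by group
        _ = g := by rw [h₁, mul_one]
    have ghg : g * h * g = h :=
      calc g * h * g = h * (g⁻¹ * (g * h⁻¹ * g * h) * g) := by group
        _ = h := by rw [h₂]; group
    constructor
    · calc h ^ 2 = g * h * g * h := by rw [ghg, sq]
        _ = g * (h * g * h) := by group
        _ = g ^ 2 := by rw [hgh, sq]
    · calc g * h = g * h * g * g⁻¹ := by group
        _ = h * g⁻¹ := by rw [ghg]
  · rintro ⟨hsq, hgh⟩
    constructor
    · calc g⁻¹ * h * g * h = g⁻¹ * h * (g * h) := by group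
        _ = g⁻¹ * h ^ 2 * g⁻¹ := by simp only [hgh, sq, mul_assoc]
        _ = 1 := by rw [hsq]; group
    · calc g * h⁻¹ * g * h = g * h⁻¹ * (g * h) := by group
        _ = 1 := by rw [hgh]; group

end

namespace QuaternionGroup

variable {n : ℕ}

theorem a_one_zpow (k : ℤ) : (a 1 : QuaternionGroup n) ^ k = a k := by
  cases k with
  | ofNat m => simp
  | negSucc m => rw [zpow_negSucc, a_one_pow]; push_cast; rfl

variable {G : Type*} [Group G]

/-- `ZMod.cast` into `ℤ` picks a representative of `i`, so this also covers `n = 0`. -/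
def lift (g h : G) (hsq : h ^ 2 = g ^ n) (hgh : g * h = h * g⁻¹) : QuaternionGroup n →* G where
  toFun
    | a i => g ^ (i.cast : ℤ)
    | xa i => h * g ^ (i.cast : ℤ)
  map_one' := zpow_cast_eq_zpow_of_intCast_eq (pow_two_mul_eq_one_of_sq_eq_pow hsq hgh)
    (k := 0) Int.cast_zero |>.trans (zpow_zero g)
  map_mul' := by
    have hg := pow_two_mul_eq_one_of_sq_eq_pow hsq hgh
    rintro (i | i) (j | j) <;> simp only [a_mul_a, a_mul_xa, xa_mul_a, xa_mul_xa]
    · rw [zpow_cast_eq_zpow_of_intCast_eq hg (k := i.cast + j.cast) (by simp), zpow_add]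
    · rw [zpow_cast_eq_zpow_of_intCast_eq hg (k := -i.cast + j.cast) (by simp; ring), zpow_add,
        ← mul_assoc (g ^ _), zpow_mul_eq_mul_zpow_neg hgh, mul_assoc]
    · rw [zpow_cast_eq_zpow_of_intCast_eq hg (k := i.cast + j.cast) (by simp), zpow_add, mul_assoc]
    · rw [zpow_cast_eq_zpow_of_intCast_eq hg (k := n + (-i.cast + j.cast)) (by simp; ring),
        zpow_add, zpow_add, zpow_natCast, ← hsq, mul_assoc h, ← mul_assoc (g ^ _) h,
        zpow_mul_eq_mul_zpow_neg hgh]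
      simp only [sq, mul_assoc]

@[simp]
theorem lift_a (g h : G) (hsq : h ^ 2 = g ^ n) (hgh : g * h = h * g⁻¹) (i : ZMod (2 * n)) :
    lift g h hsq hgh (a i) = g ^ (i.cast : ℤ) :=
  rfl

@[simp]
theorem lift_xa (g h : G) (hsq : h ^ 2 = g ^ n) (hgh : g * h = h * g⁻¹) (i : ZMod (2 * n)) :
    lift g h hsq hgh (xa i) = h * g ^ (i.cast : ℤ) :=
  rfl

def homEquiv :
    (QuaternionGroup n →* G) ≃ {p : G × G // p.2 ^ 2 = p.1 ^ n ∧ p.1 * p.2 = p.2 * p.1⁻¹} where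
  toFun φ := ⟨(φ (a 1), φ (xa 0)), by rw [← map_pow, ← map_pow, xa_sq, a_one_pow], by
    rw [← map_inv, ← map_mul, ← map_mul]
    exact congrArg φ (eq_mul_inv_of_mul_eq (by simp))⟩
  invFun p := lift p.1.1 p.1.2 p.2.1 p.2.2
  left_inv φ := by
    ext (i | i)
    · rw [lift_a, ← map_zpow, a_one_zpow, ZMod.intCast_zmod_cast]
    · rw [lift_xa, ← map_zpow, a_one_zpow, ZMod.intCast_zmod_cast, ← map_mul, xa_mul_a, zero_add]
  right_inv := by
    rintro ⟨⟨g, h⟩, hsq, hgh⟩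
    have hg := pow_two_mul_eq_one_of_sq_eq_pow hsq hgh
    ext <;> dsimp only
    · rw [lift_a, zpow_cast_eq_zpow_of_intCast_eq hg Int.cast_one, zpow_one]
    · rw [lift_xa, zpow_cast_eq_zpow_of_intCast_eq hg Int.cast_zero, zpow_zero, mul_one]

end QuaternionGroup

theorem card_hom_quaternionGroup_eq_general
    (G : Type) [Group G] :
    Nat.card (QuaternionGroup 2 →* G) =
      Nat.card {p : G × G | p.1⁻¹ * p.2 * p.1 * p.2 = 1 ∧ p.1 * p.2⁻¹ * p.1 * p.2 = 1} :=
  Nat.card_congr <| QuaternionGroup.homEquiv.trans <|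
    Equiv.subtypeEquivRight fun _ => quaternion_relations_iff.symm

/-- For any finite group `G`, the number of group homomorphisms from the quaternion group
`Q₈` to `G` equals the number of pairs `(g, h)` in `G × G` with
`g⁻¹ * h * g * h = 1` and `g * h⁻¹ * g * h = 1`. -/
theorem card_hom_quaternionGroup_eq
    (G : Type) [Group G] [Fintype G] :
    Nat.card (QuaternionGroup 2 →* G) =
      Nat.card {p : G × G | p.1⁻¹ * p.2 * p.1 * p.2 = 1 ∧ p.1 * p.2⁻¹ * p.1 * p.2 = 1} :=
  card_hom_quaternionGroup_eq_general G
end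

section
/- Let k be a field and let n, m be positive integers with d = gcd(n, m) and l = lcm(n, m) = n·m/d. In the category Rep k (Multiplicative ℤ), the tensor product M(n) ⊗ M(m) is isomorphic to the direct sum of d copies of M(l). -/
open CategoryTheory CategoryTheory.Limits MonoidalCategory

/-- `M k n` is the representation of `Multiplicative ℤ` on the free `k`-module with basis
`ZMod n`, where the integer `a` acts by the translation `i ↦ i + a` of `ZMod n` (so the
generator acts on basis vectors by the cyclic shift `i ↦ i + 1`, i.e. on functions by
`f ↦ (i ↦ f (i - 1))`).  This is the `Rep`-theoretic incarnation of the
`k[X, X⁻¹]`-module `k[X, X⁻¹]/(Xⁿ − 1)`. -/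
noncomputable def M (k : Type) [Field k] (n : ℕ) : Rep k (Multiplicative ℤ) :=
  Rep.of
    ((LinearEquiv.automorphismGroup.toLinearMapMonoidHom).comp
      (zpowersHom ((ZMod n → k) ≃ₗ[k] (ZMod n → k))
        (LinearEquiv.funCongrLeft k k (Equiv.subRight (1 : ZMod n)))))

noncomputable instance (k : Type) [Field k] :
    HasFiniteBiproducts (Rep k (Multiplicative ℤ)) :=
  HasFiniteBiproducts.of_hasFiniteProducts

/-!
A permutation `e` of a finite set `X` makes `X → k` a representation of `ℤ` (the generator acts
by `v ↦ v ∘ e`), and `M k n` is this for the shift of `ZMod n`. Tensor products of such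
representations are those of the product set with the product permutation, and equivariant
bijections of the sets give isomorphisms. The map `(c, t) ↦ (c + t, t)` is a bijection from
`Fin d × ZMod l` to `ZMod n × ZMod m` intertwining the shift of `ZMod l` with the diagonal
shift: reducing the first coordinate mod `d` recovers `c`, after which `t` is determined by
its residues mod `n` and `m`, and both sets have `d * l = n * m` elements. A permutation
representation of `ι × Y` acting trivially on `ι` is the biproduct of `|ι|` copies of that
of `Y`.
-/

section Generator

variable {k V W : Type*} [Semiring k] [AddCommMonoid V] [Module k V] [AddCommMonoid W]
  [Module k W] {ρ : Representation k (Multiplicative ℤ) V}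
  {σ : Representation k (Multiplicative ℤ) W}

theorem Representation.isIntertwiningMap_of_generator {f : V →ₗ[k] W}
    (h : ∀ v, f (ρ (.ofAdd 1) v) = σ (.ofAdd 1) (f v)) : IsIntertwiningMap ρ σ f := by
  have h_inv : ∀ v, f (ρ (.ofAdd 1)⁻¹ v) = σ (.ofAdd 1)⁻¹ (f v) := fun v => by
    conv_rhs => rw [← self_inv_apply ρ (.ofAdd 1) v, h, inv_self_apply]
  have h_mul : ∀ a b : Multiplicative ℤ, (∀ v, f (ρ a v) = σ a (f v)) →
      (∀ v, f (ρ b v) = σ b (f v)) → ∀ v, f (ρ (a * b) v) = σ (a * b) (f v) := by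
    intro a b ha hb v
    simp only [map_mul, Module.End.mul_apply, ha, hb]
  refine ⟨fun g => ?_⟩
  induction g using Int.induction_on with
  | zero => intro v; change f (ρ 1 v) = σ 1 (f v); simp
  | succ i ih => exact h_mul _ _ ih h
  | pred i ih => exact h_mul _ _ ih h_inv

def Representation.IntertwiningMap.ofGenerator (f : V →ₗ[k] W)
    (h : f ∘ₗ ρ (.ofAdd 1) = σ (.ofAdd 1) ∘ₗ f) : ρ.IntertwiningMap σ :=
  ⟨f, fun g => LinearMap.ext ((isIntertwiningMap_of_generator (LinearMap.congr_fun h)).1 g)⟩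

@[simp]
lemma Representation.IntertwiningMap.ofGenerator_apply (f : V →ₗ[k] W)
    (h : f ∘ₗ ρ (.ofAdd 1) = σ (.ofAdd 1) ∘ₗ f) (v : V) : ofGenerator f h v = f v :=
  rfl

def Representation.Equiv.ofGenerator (e : V ≃ₗ[k] W)
    (h : e.toLinearMap ∘ₗ ρ (.ofAdd 1) = σ (.ofAdd 1) ∘ₗ e.toLinearMap) : ρ.Equiv σ :=
  .mk e fun g => LinearMap.ext
    ((isIntertwiningMap_of_generator (f := e.toLinearMap) (LinearMap.congr_fun h)).1 g)

end Generator

open scoped TensorProduct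

noncomputable def funTensorEquiv (k X Y : Type*) [CommSemiring k] [Fintype X] [Fintype Y] :
    (X → k) ⊗[k] (Y → k) ≃ₗ[k] (X × Y → k) :=
  TensorProduct.congr (Finsupp.linearEquivFunOnFinite k k X).symm
      (Finsupp.linearEquivFunOnFinite k k Y).symm ≪≫ₗ
    finsuppTensorFinsupp' k X Y ≪≫ₗ Finsupp.linearEquivFunOnFinite k k (X × Y)

@[simp]
lemma funTensorEquiv_tmul {k X Y : Type*} [CommSemiring k] [Fintype X] [Fintype Y]
    (v : X → k) (w : Y → k) (p : X × Y) :
    funTensorEquiv k X Y (v ⊗ₜ w) p = v p.1 * w p.2 := by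
  obtain ⟨x, y⟩ := p
  simp [funTensorEquiv, finsuppTensorFinsupp'_apply_apply]

section PermRep

variable (k : Type) [CommRing k] {X Y : Type}

noncomputable def Representation.ofPerm (e : Equiv.Perm X) :
    Representation k (Multiplicative ℤ) (X → k) :=
  (LinearEquiv.automorphismGroup.toLinearMapMonoidHom).comp
    (zpowersHom ((X → k) ≃ₗ[k] (X → k)) (LinearEquiv.funCongrLeft k k e))

@[simp]
lemma Representation.ofPerm_ofAdd_one (e : Equiv.Perm X) :
    Representation.ofPerm k e (.ofAdd 1) = LinearMap.funLeft k k e := by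
  change (LinearEquiv.funCongrLeft k k e ^ (1 : ℤ)).toLinearMap = _
  rw [zpow_one]
  rfl

noncomputable abbrev permRep (e : Equiv.Perm X) : Rep k (Multiplicative ℤ) :=
  Rep.of (Representation.ofPerm k e)

variable {k}

noncomputable def permRepTensorIso [Fintype X] [Fintype Y] (e : Equiv.Perm X) (f : Equiv.Perm Y) :
    permRep k e ⊗ permRep k f ≅ permRep k (e.prodCongr f) :=
  Rep.mkIso <| .ofGenerator (funTensorEquiv k X Y) <| TensorProduct.ext' fun v w => by
    ext p
    simp

noncomputable def permRepIsoOfSemiconj {e : Equiv.Perm X} {f : Equiv.Perm Y} (φ : X ≃ Y)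
    (h : Function.Semiconj φ e f) : permRep k e ≅ permRep k f :=
  Rep.mkIso <| .ofGenerator (LinearEquiv.funCongrLeft k k φ.symm) <| by
    ext v y
    simp [h.inverse_left φ.leftInverse_symm φ.rightInverse_symm y]

variable (k) (ι : Type) [DecidableEq ι] (f : Equiv.Perm Y)

noncomputable def permRepProj (i : ι) : permRep k ((Equiv.refl ι).prodCongr f) ⟶ permRep k f :=
  Rep.ofHom <| .ofGenerator (LinearMap.funLeft k k (Prod.mk i)) <| by ext; simp

noncomputable def permRepIncl (i : ι) : permRep k f ⟶ permRep k ((Equiv.refl ι).prodCongr f) :=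
  Rep.ofHom <| .ofGenerator ((LinearEquiv.curry k k ι Y).symm.toLinearMap ∘ₗ
      LinearMap.single k (fun _ => Y → k) i) <| by
    ext v ⟨j, y⟩
    by_cases h : j = i <;> simp [h]

lemma permRepIncl_comp_proj (i j : ι) :
    permRepIncl k ι f i ≫ permRepProj k ι f j = if i = j then 𝟙 _ else 0 := by
  split_ifs with h
  · subst h
    ext v y
    simp [permRepIncl, permRepProj]
  · ext v y
    simp [permRepIncl, permRepProj, h]

lemma sum_permRepProj_comp_incl [Fintype ι] :
    ∑ i, permRepProj k ι f i ≫ permRepIncl k ι f i =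
      𝟙 (permRep k ((Equiv.refl ι).prodCongr f)) := by
  ext v ⟨j, y⟩
  simp [Rep.sum_hom, Representation.IntertwiningMap.sum_apply, permRepIncl, permRepProj,
    Finset.sum_apply, Pi.single_apply, ite_apply]

noncomputable def permRepProdBicone : Bicone fun _ : ι => permRep k f where
  pt := permRep k ((Equiv.refl ι).prodCongr f)
  π := permRepProj k ι f
  ι := permRepIncl k ι f
  ι_π i j := by
    split_ifs with h
    · subst h
      simp [permRepIncl_comp_proj]
    · simp [permRepIncl_comp_proj, h]

noncomputable def permRepProdBicone.isBilimit [Fintype ι] : (permRepProdBicone k ι f).IsBilimit :=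
  isBilimitOfTotal _ (sum_permRepProj_comp_incl k ι f)

end PermRep

namespace ZMod

lemma castHom_lcm_injective (n m : ℕ) :
    Function.Injective (castHom (dvd_refl (n.lcm m)) (ZMod n × ZMod m)) := by
  refine (injective_iff_map_eq_zero _).2 fun t ht => ?_
  rw [← intCast_zmod_cast t, map_intCast, CharP.intCast_eq_zero_iff _ (n.lcm m)] at ht
  rw [← intCast_zmod_cast t]
  exact (CharP.intCast_eq_zero_iff _ (n.lcm m) _).2 ht

lemma eq_of_castHom_eq {n m : ℕ} {t t' : ZMod (n.lcm m)}
    (hn : castHom (Nat.dvd_lcm_left n m) (ZMod n) t = castHom (Nat.dvd_lcm_left n m) (ZMod n) t')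
    (hm :
      castHom (Nat.dvd_lcm_right n m) (ZMod m) t = castHom (Nat.dvd_lcm_right n m) (ZMod m) t') :
    t = t' := by
  refine castHom_lcm_injective n m (Prod.ext ?_ ?_) <;>
    simpa only [castHom_apply, Prod.fst_zmod_cast, Prod.snd_zmod_cast]

variable (n m : ℕ)

def gcdLcmMap (p : Fin (n.gcd m) × ZMod (n.lcm m)) : ZMod n × ZMod m :=
  ((p.1 : ℕ) + castHom (Nat.dvd_lcm_left n m) (ZMod n) p.2,
    castHom (Nat.dvd_lcm_right n m) (ZMod m) p.2)

lemma gcdLcmMap_injective : Function.Injective (gcdLcmMap n m) := by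
  rintro ⟨c, t⟩ ⟨c', t'⟩ h
  obtain ⟨hn, hm⟩ := Prod.mk.inj h
  have hd := congrArg (castHom (Nat.gcd_dvd_left n m) (ZMod (n.gcd m))) hn
  have hd' := congrArg (castHom (Nat.gcd_dvd_right n m) (ZMod (n.gcd m))) hm
  simp only [map_add, map_natCast, ← RingHom.comp_apply, castHom_comp] at hd hd'
  rw [hd', add_left_inj, natCast_eq_natCast_iff', Nat.mod_eq_of_lt c.isLt,
    Nat.mod_eq_of_lt c'.isLt] at hd
  obtain rfl : c = c' := Fin.ext hd
  exact Prod.ext rfl (eq_of_castHom_eq (add_right_injective _ hn) hm)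

variable [NeZero n] [NeZero m]

noncomputable def gcdLcmEquiv : Fin (n.gcd m) × ZMod (n.lcm m) ≃ ZMod n × ZMod m :=
  have : NeZero (n.lcm m) := ⟨Nat.lcm_ne_zero (NeZero.ne n) (NeZero.ne m)⟩
  .ofBijective (gcdLcmMap n m) <| (Fintype.bijective_iff_injective_and_card _).2
    ⟨gcdLcmMap_injective n m, by simp [Nat.gcd_mul_lcm]⟩

lemma gcdLcmEquiv_semiconj :
    Function.Semiconj (gcdLcmEquiv n m) ((Equiv.refl _).prodCongr (Equiv.subRight 1))
      ((Equiv.subRight 1).prodCongr (Equiv.subRight 1)) := by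
  rintro ⟨c, t⟩
  simp only [gcdLcmEquiv, Equiv.ofBijective_apply, gcdLcmMap, Equiv.prodCongr_apply, Prod.map,
    Equiv.refl_apply, Equiv.subRight_apply, map_sub, map_one, add_sub_assoc]

end ZMod

/-- In `Rep k (Multiplicative ℤ)`, the tensor product `M(n) ⊗ M(m)` is isomorphic to the
direct sum of `gcd n m` copies of `M(lcm n m)`. -/
theorem M_tensor_M_iso_biproduct
    (k : Type) [Field k] (n m : ℕ) (hn : 0 < n) (hm : 0 < m) :
    Nonempty ((M k n ⊗ M k m) ≅ ⨁ fun _ : Fin (Nat.gcd n m) => M k (Nat.lcm n m)) := by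
  have : NeZero n := ⟨hn.ne'⟩
  have : NeZero m := ⟨hm.ne'⟩
  exact ⟨permRepTensorIso _ _ ≪≫
    (permRepIsoOfSemiconj _ (ZMod.gcdLcmEquiv_semiconj n m)).symm ≪≫
    biproduct.uniqueUpToIso _ (permRepProdBicone.isBilimit k _ _)⟩
end

section
/- Let k be a field and let n, m be positive integers. The k-vector space of morphisms from M(n) to M(m) in Rep k (Multiplicative ℤ) (equivalently, the space of k-linear maps f : (ZMod n → k) → (ZMod m → k) intertwining the cyclic shift operators) has dimension gcd(n, m): finrank k (M(n) ⟶ M(m)) = Nat.gcd n m. -/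
open CategoryTheory

/-!
`M(n)` is generated by `δ₀` subject only to the relation `Xⁿ δ₀ = δ₀`, so a morphism out of
`M(n)` is the same as a vector fixed by `Xⁿ`. In `M(m)` the vectors fixed by `Xⁿ` are the
functions on `ZMod m` invariant under translation by `n`, i.e. the functions on the quotient of
`ZMod m` by the subgroup generated by `n`, and that subgroup has index `gcd(n, m)`.
-/

open Module

theorem LinearEquiv.funCongrLeft_subRight_zpow (R V : Type*) {G : Type*} [Semiring R]
    [AddCommMonoid V] [Module R V] [AddCommGroup G] (c : G) (a : ℤ) :
    funCongrLeft R V (Equiv.subRight c) ^ a = funCongrLeft R V (Equiv.subRight (a • c)) := by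
  induction a using Int.induction_on with
  | zero => ext; simp
  | succ a ih =>
    rw [zpow_add_one, ih]
    ext v i
    simp [add_smul, sub_sub, add_comm]
  | pred a ih =>
    rw [zpow_sub_one, ih]
    ext v i
    simp only [mul_apply, coe_inv, funCongrLeft_symm, funCongrLeft_apply, LinearMap.funLeft_apply,
      Equiv.subRight_apply, Equiv.subRight_symm_apply, sub_smul, neg_smul, one_smul]
    congr 1
    abel

theorem Representation.apply_zpow_eq_self_of_apply_eq_self {k G W : Type*} [CommSemiring k]
    [Group G] [AddCommMonoid W] [Module k W] (ρ : Representation k G W) {g : G} {w : W}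
    (hw : ρ g w = w) (t : ℤ) : ρ (g ^ t) w = w := by
  have hinv : ρ g⁻¹ w = w := by
    conv_lhs => rw [← hw]
    exact ρ.inv_self_apply g w
  induction t using Int.induction_on with
  | zero => simp
  | succ t ih => rw [zpow_add_one, map_mul, End.mul_apply, hw, ih]
  | pred t ih => rw [zpow_sub_one, map_mul, End.mul_apply, hinv, ih]

section PeriodicFunctions

variable {G : Type*} [AddGroup G]

theorem mem_range_funLeft_mk_zmultiples_iff {k : Type*} [Semiring k] {c : G} {w : G → k} :
    w ∈ LinearMap.range
        (LinearMap.funLeft k k (QuotientAddGroup.mk : G → G ⧸ AddSubgroup.zmultiples c)) ↔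
      Function.Periodic w c := by
  constructor
  · rintro ⟨g, rfl⟩ x
    exact congrArg g (QuotientAddGroup.mk_add_of_mem x (AddSubgroup.mem_zmultiples c))
  · exact fun hw => ⟨hw.lift, funext hw.lift_coe⟩

theorem finrank_range_funLeft_mk (k : Type*) [Ring k] [StrongRankCondition k]
    (H : AddSubgroup G) [H.FiniteIndex] :
    finrank k (LinearMap.range (LinearMap.funLeft k k (QuotientAddGroup.mk : G → G ⧸ H))) =
      H.index := by
  have := Fintype.ofFinite (G ⧸ H)
  rw [LinearMap.finrank_range_of_inj (LinearMap.funLeft_injective_of_surjective _ _ _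
    QuotientAddGroup.mk_surjective), finrank_fintype_fun_eq_card, AddSubgroup.index,
    Nat.card_eq_fintype_card]

end PeriodicFunctions

theorem ZMod.index_zmultiples_natCast (n : ℕ) {m : ℕ} (hm : m ≠ 0) :
    (AddSubgroup.zmultiples (n : ZMod m)).index = n.gcd m := by
  have h := (AddSubgroup.zmultiples (n : ZMod m)).card_mul_index
  rw [Nat.card_zmultiples, ZMod.addOrderOf_coe n hm, Nat.card_zmod, Nat.gcd_comm] at h
  have hm' := Nat.pos_of_ne_zero hm
  have hpos : 0 < m / n.gcd m :=
    Nat.div_pos (Nat.gcd_le_right _ hm') (Nat.gcd_pos_of_pos_right _ hm')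
  apply Nat.eq_of_mul_eq_mul_left hpos
  rw [h, Nat.div_mul_cancel (Nat.gcd_dvd_right n m)]

section M

variable {k : Type} [Field k] {n : ℕ}

/-- `(M k n).ρ`, typed on `ZMod n → k` rather than on the carrier of `M k n`: the two agree only
after unfolding `M`, which rewriting inside applications does not do. -/
noncomputable def shiftRep (k : Type) [Field k] (n : ℕ) :
    Representation k (Multiplicative ℤ) (ZMod n → k) :=
  (M k n).ρ

theorem shiftRep_ofAdd_apply (a : ℤ) (v : ZMod n → k) (i : ZMod n) :
    shiftRep k n (.ofAdd a) v i = v (i - a) := by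
  change (LinearEquiv.funCongrLeft k k (Equiv.subRight (1 : ZMod n)) ^ a) v i = _
  rw [LinearEquiv.funCongrLeft_subRight_zpow]
  simp

theorem shiftRep_ofAdd_single (a : ℤ) (i : ZMod n) (c : k) :
    shiftRep k n (.ofAdd a) (Pi.single i c) = Pi.single (i + a) c := by
  funext j
  rw [shiftRep_ofAdd_apply]
  simp only [Pi.single_apply, sub_eq_iff_eq_add]

theorem eigenspace_shiftRep_ofAdd_natCast (m : ℕ) :
    End.eigenspace (shiftRep k m (.ofAdd (n : ℤ))) 1 = LinearMap.range (LinearMap.funLeft k k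
      (QuotientAddGroup.mk : ZMod m → ZMod m ⧸ AddSubgroup.zmultiples (n : ZMod m))) := by
  ext w
  rw [End.mem_eigenspace_iff, one_smul, mem_range_funLeft_mk_zmultiples_iff, funext_iff]
  simp only [shiftRep_ofAdd_apply, Int.cast_natCast]
  exact ⟨fun h x => by simpa using (h (x + n)).symm, fun h x => h.sub_eq x⟩

variable {W : Type*} [AddCommGroup W] [Module k W] (σ : Representation k (Multiplicative ℤ) W)

theorem apply_ofAdd_eq_of_mem_eigenspace {w : W}
    (hw : w ∈ End.eigenspace (σ (.ofAdd (n : ℤ))) 1) {a b : ℤ} (hab : (a : ZMod n) = b) :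
    σ (.ofAdd a) w = σ (.ofAdd b) w := by
  obtain ⟨t, ht⟩ := (ZMod.intCast_eq_intCast_iff_dvd_sub a b n).1 hab
  rw [End.mem_eigenspace_iff, one_smul] at hw
  rw [eq_add_of_sub_eq' ht, ofAdd_add, Int.ofAdd_mul, map_mul, End.mul_apply,
    σ.apply_zpow_eq_self_of_apply_eq_self hw]

variable [NeZero n]

noncomputable def shiftRepLift (w : End.eigenspace (σ (.ofAdd (n : ℤ))) 1) :
    (shiftRep k n).IntertwiningMap σ where
  toLinearMap := (Pi.basisFun k (ZMod n)).constr k fun i => σ (.ofAdd (i.val : ℤ)) w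
  isIntertwining' g := by
    obtain ⟨a, rfl⟩ := Multiplicative.ofAdd.surjective g
    refine (Pi.basisFun k (ZMod n)).ext fun i => ?_
    simp only [LinearMap.comp_apply, Pi.basisFun_apply]
    rw [shiftRep_ofAdd_single, ← Pi.basisFun_apply, ← Pi.basisFun_apply, Basis.constr_basis,
      Basis.constr_basis, ← End.mul_apply, ← map_mul, ← ofAdd_add]
    exact apply_ofAdd_eq_of_mem_eigenspace σ w.2 (by simp [add_comm])

theorem shiftRepLift_single (w : End.eigenspace (σ (.ofAdd (n : ℤ))) 1) (i : ZMod n) :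
    shiftRepLift σ w (Pi.single i 1) = σ (.ofAdd (i.val : ℤ)) w := by
  rw [← Pi.basisFun_apply]
  exact (Pi.basisFun k (ZMod n)).constr_basis k _ i

noncomputable def intertwiningMapShiftRepEquiv :
    (shiftRep k n).IntertwiningMap σ ≃ₗ[k] End.eigenspace (σ (.ofAdd (n : ℤ))) 1 where
  toFun f := ⟨f (Pi.single 0 1), by
    rw [End.mem_eigenspace_iff, one_smul, ← f.isIntertwining, shiftRep_ofAdd_single]
    simp⟩
  map_add' _ _ := rfl
  map_smul' _ _ := rfl
  invFun := shiftRepLift σ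
  left_inv f := by
    refine Representation.IntertwiningMap.ext ((Pi.basisFun k (ZMod n)).ext fun i => ?_)
    simp only [Pi.basisFun_apply, Representation.IntertwiningMap.toLinearMap_apply]
    rw [shiftRepLift_single, ← f.isIntertwining, shiftRep_ofAdd_single]
    simp
  right_inv w := by
    ext
    simp [shiftRepLift_single]

noncomputable def homMEquivEigenspace (m : ℕ) :
    (M k n ⟶ M k m) ≃ₗ[k] End.eigenspace (shiftRep k m (.ofAdd (n : ℤ))) 1 :=
  (Rep.homLinearEquiv (M k n) (M k m)).trans (intertwiningMapShiftRepEquiv (shiftRep k m))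

end M

/-- The space of morphisms `M(n) ⟶ M(m)` in `Rep k (Multiplicative ℤ)` has `k`-dimension
`gcd n m`. -/
theorem finrank_hom_M_M (k : Type) [Field k] (n m : ℕ) (hn : 0 < n) (hm : 0 < m) :
    Module.finrank k (M k n ⟶ M k m) = Nat.gcd n m := by
  have : NeZero n := ⟨hn.ne'⟩
  have : NeZero m := ⟨hm.ne'⟩
  rw [(homMEquivEigenspace m).finrank_eq, eigenspace_shiftRep_ofAdd_natCast,
    finrank_range_funLeft_mk, ZMod.index_zmultiples_natCast n hm.ne']
end

section
/- Let k be a field, n a natural number, and σ, τ : Equiv.Perm (Fin n) permutations. The permutation matrices P_σ and P_τ over k are similar (there exists an invertible n×n matrix M over k with M * P_σ * M⁻¹ = P_τ) if and only if σ and τ are conjugate in the symmetric group (IsConj σ τ). -/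
/-!
Similar matrices have equal ranks, so `rank (P_σ ^ m - 1) = rank (P_τ ^ m - 1)` for every `m`.
Working with ranks rather than traces or characteristic polynomials makes the argument
independent of the characteristic: the kernel of `P_π - 1` consists of the functions constant
on the cycles of `π`, so its dimension is the number of cycles of `π`, fixed points included.
A cycle of length `d` of `π` splits into `gcd d m` cycles of `π ^ m`, so the sums `∑ gcd d m`
over the cycle lengths `d` of `σ` and of `τ` agree for all `m`. Since
`gcd d m = ∑_{e ∣ gcd d m} φ e`, Möbius inversion recovers, for every `e`, the number of cycle
lengths divisible by `e`; looking at the largest cycle length and inducting, these numbers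
determine the multiset of cycle lengths.
-/

open Equiv Equiv.Perm Function MulAction Subgroup Finset ArithmeticFunction
open scoped Nat

theorem Matrix.isConj_iff_exists_isUnit {n R : Type*} [Fintype n] [DecidableEq n] [CommRing R]
    {A B : Matrix n n R} : IsConj A B ↔ ∃ M, IsUnit M ∧ M * A * M⁻¹ = B := by
  refine ⟨fun ⟨u, hu⟩ => ⟨u, u.isUnit, ?_⟩, fun ⟨_, ⟨u, hu⟩, h⟩ => ⟨u, ?_⟩⟩
  · rw [← coe_units_inv, Units.mul_inv_eq_iff_eq_mul]
    exact hu
  · rwa [← hu, ← coe_units_inv, Units.mul_inv_eq_iff_eq_mul] at h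

theorem Matrix.rank_eq_of_isConj {n R : Type*} [Fintype n] [DecidableEq n] [CommRing R]
    {A B : Matrix n n R} (h : IsConj A B) : A.rank = B.rank := by
  obtain ⟨u, hu⟩ := h
  have hdet : IsUnit (u : Matrix n n R).det := (isUnit_iff_isUnit_det _).1 u.isUnit
  rw [← rank_mul_eq_right_of_isUnit_det _ A hdet, hu.eq, rank_mul_eq_left_of_isUnit_det _ B hdet]

theorem IsConj.sub_one {R : Type*} [Ring R] {a b : R} (h : IsConj a b) :
    IsConj (a - 1) (b - 1) :=
  let ⟨c, hc⟩ := h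
  ⟨c, hc.sub_right (SemiconjBy.one_right _)⟩

theorem MulAction.card_orbitRel_quotient_eq_sum_inv {G α : Type*} [Group G] [MulAction G α]
    [Fintype α] :
    (Nat.card (orbitRel.Quotient G α) : ℚ) = ∑ x : α, (Nat.card (orbit G x) : ℚ)⁻¹ := by
  classical
  rw [← Fintype.sum_equiv (selfEquivSigmaOrbits G α).symm _ _ fun _ => rfl, Fintype.sum_sigma,
    Nat.card_eq_fintype_card, Fintype.card_eq_sum_ones, Nat.cast_sum]
  refine Fintype.sum_congr _ _ fun ω => ?_
  have hω : ∀ y : orbit G ω.out,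
      orbit G ((selfEquivSigmaOrbits G α).symm ⟨ω, y⟩) = orbit G ω.out :=
    fun y => orbit_eq_iff.2 y.2
  have : Nonempty (orbit G ω.out) := (nonempty_orbit ω.out).to_subtype
  simp only [hω, sum_const, card_univ, ← Nat.card_eq_fintype_card, nsmul_eq_mul]
  rw [Nat.cast_one, mul_inv_cancel₀ (Nat.cast_ne_zero.2 Nat.card_pos.ne')]

theorem Nat.eq_of_forall_sum_divisors_eq {R : Type*} [AddCommGroup R] {f g : ℕ → R}
    (h : ∀ n > 0, ∑ d ∈ n.divisors, f d = ∑ d ∈ n.divisors, g d) {n : ℕ} (hn : 0 < n) :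
    f n = g n := by
  rw [← (sum_eq_iff_sum_smul_moebius_eq (f := f)).1 (fun _ _ => rfl) n hn,
    (sum_eq_iff_sum_smul_moebius_eq (f := g)).1 (fun m hm => (h m hm).symm) n hn]

theorem Nat.gcd_eq_sum_totient_filter_dvd (a : ℕ) {m : ℕ} (hm : m ≠ 0) :
    a.gcd m = ∑ e ∈ m.divisors with e ∣ a, φ e := by
  have : {e ∈ m.divisors | e ∣ a} = {e ∈ m.divisors | e ∣ a.gcd m} :=
    filter_congr fun e he => by rw [dvd_gcd_iff, and_iff_left (mem_divisors.1 he).1]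
  rw [this, divisors_filter_dvd_of_dvd hm (gcd_dvd_right a m), sum_totient]

namespace Multiset

theorem sum_map_gcd_eq_sum_totient_mul (A : Multiset ℕ) {m : ℕ} (hm : m ≠ 0) :
    (A.map (Nat.gcd · m)).sum = ∑ e ∈ m.divisors, φ e * card (A.filter (e ∣ ·)) := by
  induction A using Multiset.induction_on with
  | empty => simp
  | cons a A ih =>
    simp only [map_cons, sum_cons, ih, filter_cons, card_add, mul_add, sum_add_distrib,
      Nat.gcd_eq_sum_totient_filter_dvd a hm, sum_filter]
    congr 1
    refine Finset.sum_congr rfl fun e _ => ?_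
    split_ifs <;> simp

theorem card_filter_dvd_eq_of_sum_map_gcd_eq {A B : Multiset ℕ}
    (h : ∀ m > 0, (A.map (Nat.gcd · m)).sum = (B.map (Nat.gcd · m)).sum) {e : ℕ} (he : 0 < e) :
    card (A.filter (e ∣ ·)) = card (B.filter (e ∣ ·)) := by
  have key := Nat.eq_of_forall_sum_divisors_eq (R := ℤ)
    (f := fun e => φ e * card (A.filter (e ∣ ·))) (g := fun e => φ e * card (B.filter (e ∣ ·)))
    (fun m hm => by
      exact_mod_cast (sum_map_gcd_eq_sum_totient_mul A hm.ne').symm.trans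
        ((h m hm).trans (sum_map_gcd_eq_sum_totient_mul B hm.ne'))) he
  exact Nat.eq_of_mul_eq_mul_left (Nat.totient_pos.2 he) (by exact_mod_cast key)

theorem eq_of_sum_map_gcd_eq {A B : Multiset ℕ} (hA : 0 ∉ A) (hB : 0 ∉ B)
    (h : ∀ m > 0, (A.map (Nat.gcd · m)).sum = (B.map (Nat.gcd · m)).sum) : A = B := by
  induction A using Multiset.strongInductionOn generalizing B with
  | ih A ih =>
  rcases eq_or_ne (A + B) 0 with hAB | hAB
  · rw [add_eq_zero] at hAB
    rw [hAB.1, hAB.2]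
  obtain ⟨D, hD, hmax⟩ := exists_max_image id hAB
  have hDpos : 0 < D :=
    Nat.pos_of_ne_zero fun h0 => (mem_add.1 hD).elim (hA <| h0 ▸ ·) (hB <| h0 ▸ ·)
  have mem_iff : ∀ C ≤ A + B, 0 ∉ C → (D ∈ C ↔ 0 < card (C.filter (D ∣ ·))) := by
    refine fun C hC hC0 => ⟨fun hDC => card_pos_iff_exists_mem.2 ⟨D, mem_filter.2 ⟨hDC, dvd_rfl⟩⟩,
      fun hpos => ?_⟩
    obtain ⟨c, hc⟩ := card_pos_iff_exists_mem.1 hpos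
    obtain ⟨hcC, hDc⟩ := mem_filter.1 hc
    have hc0 : 0 < c := Nat.pos_of_ne_zero fun h0 => hC0 (h0 ▸ hcC)
    rwa [le_antisymm (Nat.le_of_dvd hc0 hDc) (hmax c (mem_of_le hC hcC))]
  have hiff : D ∈ A ↔ D ∈ B := by
    rw [mem_iff A (Multiset.le_add_right A B) hA, mem_iff B (Multiset.le_add_left B A) hB,
      card_filter_dvd_eq_of_sum_map_gcd_eq h hDpos]
  obtain ⟨A', rfl⟩ := exists_cons_of_mem ((mem_add.1 hD).elim id hiff.2)
  obtain ⟨B', rfl⟩ := exists_cons_of_mem (hiff.1 (mem_cons_self _ _))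
  rw [ih A' (lt_cons_self _ _) (fun h0 => hA (mem_cons_of_mem h0))
    (fun h0 => hB (mem_cons_of_mem h0)) fun m hm => by simpa using h m hm]

end Multiset

namespace Equiv.Perm

theorem card_orbit_zpowers {α : Type*} (π : Perm α) (x : α) :
    Nat.card (orbit (zpowers π) x) = minimalPeriod π x := by
  rw [Nat.card_congr (orbitZPowersEquiv π x), Nat.card_zmod]
  rfl

theorem comp_eq_of_mem_zpowers {α β : Type*} [Finite α] {π g : Perm α} {v : α → β}
    (hv : v ∘ π = v) (hg : g ∈ zpowers π) : v ∘ g = v := by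
  obtain ⟨n, rfl⟩ := (Submonoid.mem_powers_iff _ _).1 (mem_powers_iff_mem_zpowers.2 hg)
  clear hg
  induction n with
  | zero => rfl
  | succ n ih => rw [pow_succ, coe_mul, ← comp_assoc, ih, hv]

variable {α : Type*} [Fintype α] [DecidableEq α]

theorem permMatrix_pow (R : Type*) [Semiring R] (π : Perm α) (m : ℕ) :
    (π ^ m).permMatrix R = π.permMatrix R ^ m := by
  induction m with
  | zero => simp
  | succ m ih => rw [pow_succ, Matrix.permMatrix_mul, ih, pow_succ']

theorem isConj_permMatrix {R : Type*} [Semiring R] {σ τ : Perm α} (h : IsConj σ τ) :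
    IsConj (σ.permMatrix R) (τ.permMatrix R) := by
  obtain ⟨c, hc⟩ := h
  simpa using (Matrix.permMatrixHom (n := α) (R := R)).map_isConj ⟨c, hc.inv_right⟩

theorem finrank_ker_permMatrix_sub_one (k : Type*) [Field k] (π : Perm α) :
    Module.finrank k (LinearMap.ker (π.permMatrix k - 1).mulVecLin) =
      Nat.card (orbitRel.Quotient (zpowers π) α) := by
  classical
  let mk : α → orbitRel.Quotient (zpowers π) α := Quotient.mk _
  have mem_ker (v : α → k) : v ∈ LinearMap.ker (π.permMatrix k - 1).mulVecLin ↔ v ∘ π = v := by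
    rw [LinearMap.mem_ker, Matrix.mulVecLin_apply, Matrix.sub_mulVec, Matrix.one_mulVec,
      sub_eq_zero, Matrix.permMatrix_mulVec]
  have mk_apply (x : α) : mk (π x) = mk x :=
    Quotient.sound (mem_orbit x (⟨π, mem_zpowers π⟩ : zpowers π))
  let Φ := (LinearMap.funLeft k k mk).codRestrict _ fun w =>
    (mem_ker _).2 (funext fun x => congrArg w (mk_apply x))
  have hΦ : Bijective Φ := by
    refine ⟨fun w w' h => LinearMap.funLeft_injective_of_surjective k k mk Quotient.mk_surjective
      (congrArg Subtype.val h), fun ⟨v, hv⟩ => ⟨Quotient.lift v fun x y ⟨g, hg⟩ => ?_, rfl⟩⟩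
    rw [← hg]
    exact congrFun (comp_eq_of_mem_zpowers ((mem_ker v).1 hv) g.2) y
  rw [← LinearEquiv.finrank_eq (LinearEquiv.ofBijective Φ hΦ),
    Module.finrank_fintype_fun_eq_card, Nat.card_eq_fintype_card]

theorem rank_permMatrix_sub_one_add_card_orbits (k : Type*) [Field k] (π : Perm α) :
    (π.permMatrix k - 1).rank + Nat.card (orbitRel.Quotient (zpowers π) α) = Fintype.card α := by
  rw [← finrank_ker_permMatrix_sub_one k, Matrix.rank, LinearMap.finrank_range_add_finrank_ker,
    Module.finrank_fintype_fun_eq_card]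

theorem minimalPeriod_eq_card_support_cycleOf {π : Perm α} {x : α} (hx : x ∈ π.support) :
    minimalPeriod π x = #(π.cycleOf x).support := by
  have key (n : ℕ) : IsPeriodicPt π n x ↔ #(π.cycleOf x).support ∣ n := by
    rw [IsPeriodicPt, IsFixedPt, iterate_eq_pow]
    exact (π.isCycleOn_support_cycleOf x).pow_apply_eq (mem_support_cycleOf_iff.2 ⟨.refl _ _, hx⟩)
  exact Nat.dvd_antisymm (isPeriodicPt_iff_minimalPeriod_dvd.1 ((key _).2 dvd_rfl))
    ((key _).1 (isPeriodicPt_minimalPeriod π x))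

theorem sum_minimalPeriod_eq_sum_parts {M : Type*} [AddCommMonoid M] (π : Perm α) (F : ℕ → M) :
    ∑ x, F (minimalPeriod π x) = (π.partition.parts.map fun d => d • F d).sum := by
  rw [parts_partition, Multiset.map_add, Multiset.sum_add, Multiset.map_replicate,
    Multiset.sum_replicate, one_smul, ← Finset.sum_add_sum_compl π.support]
  congr 1
  · rw [cycleType_def, Multiset.map_map, ← Finset.sum_eq_multiset_sum,
      ← Finset.sum_fiberwise_of_maps_to (g := π.cycleOf) (t := π.cycleFactorsFinset)
        fun x hx => cycleOf_mem_cycleFactorsFinset_iff.2 hx]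
    refine Finset.sum_congr rfl fun c hc => ?_
    have hfiber : {x ∈ π.support | π.cycleOf x = c} = c.support := by
      ext x
      rw [mem_filter, eq_comm, eq_cycleOf_of_mem_cycleFactorsFinset_iff _ _ hc]
      exact ⟨And.right, fun hx => ⟨mem_cycleFactorsFinset_support_le hc hx, hx⟩⟩
    rw [hfiber, Finset.sum_congr rfl fun x hx => by
      rw [minimalPeriod_eq_card_support_cycleOf (mem_cycleFactorsFinset_support_le hc hx),
        ← (eq_cycleOf_of_mem_cycleFactorsFinset_iff _ _ hc x).2 hx], sum_const]
    rfl
  · rw [← card_compl, ← sum_const]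
    refine Finset.sum_congr rfl fun x hx => ?_
    rw [minimalPeriod_eq_one_iff_isFixedPt.2 (notMem_support.1 (mem_compl.1 hx))]

theorem card_orbits_pow (π : Perm α) (m : ℕ) :
    Nat.card (orbitRel.Quotient (zpowers (π ^ m)) α) =
      (π.partition.parts.map (Nat.gcd · m)).sum := by
  have hperiod (x : α) :
      minimalPeriod (π ^ m) x = minimalPeriod π x / (minimalPeriod π x).gcd m := by
    rw [← iterate_eq_pow, minimalPeriod_iterate_eq_div_gcd' (π.injective.mem_periodicPts x)]
  have hpos (x : α) : 0 < minimalPeriod π x :=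
    minimalPeriod_pos_of_mem_periodicPts (π.injective.mem_periodicPts x)
  rw [← Nat.cast_inj (R := ℚ), card_orbitRel_quotient_eq_sum_inv]
  calc ∑ x, (Nat.card (orbit (zpowers (π ^ m)) x) : ℚ)⁻¹
      = ∑ x, ((minimalPeriod π x).gcd m : ℚ) / minimalPeriod π x := by
        refine Finset.sum_congr rfl fun x _ => ?_
        rw [card_orbit_zpowers, hperiod, Nat.cast_div (Nat.gcd_dvd_left _ _), inv_div]
        exact Nat.cast_ne_zero.2 (Nat.gcd_pos_of_pos_left _ (hpos x)).ne'
    _ = (π.partition.parts.map fun d : ℕ => d • ((d.gcd m : ℚ) / d)).sum :=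
        sum_minimalPeriod_eq_sum_parts π fun d : ℕ => (d.gcd m : ℚ) / d
    _ = _ := by
        rw [Nat.cast_multiset_sum, Multiset.map_map]
        refine congrArg _ (Multiset.map_congr rfl fun d hd => ?_)
        rw [nsmul_eq_mul, mul_div_cancel₀ _ (Nat.cast_ne_zero.2 (π.partition.parts_pos hd).ne')]
        rfl

theorem isConj_of_card_orbits_pow_eq {σ τ : Perm α}
    (h : ∀ m, Nat.card (orbitRel.Quotient (zpowers (σ ^ m)) α) =
      Nat.card (orbitRel.Quotient (zpowers (τ ^ m)) α)) : IsConj σ τ := by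
  rw [partition_eq_of_isConj, Nat.Partition.ext_iff]
  refine Multiset.eq_of_sum_map_gcd_eq (fun h0 => lt_irrefl 0 (σ.partition.parts_pos h0))
    (fun h0 => lt_irrefl 0 (τ.partition.parts_pos h0)) fun m _ => ?_
  rw [← card_orbits_pow, ← card_orbits_pow, h]

end Equiv.Perm

/-- Two permutation matrices over a field `k` are similar if and only if the underlying
permutations are conjugate in the symmetric group. -/
theorem permMatrix_similar_iff_isConj
    (k : Type) [Field k] (n : ℕ) (σ τ : Equiv.Perm (Fin n)) :
    (∃ M : Matrix (Fin n) (Fin n) k, IsUnit M ∧ M * σ.permMatrix k * M⁻¹ = τ.permMatrix k) ↔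
      IsConj σ τ := by
  rw [← Matrix.isConj_iff_exists_isUnit]
  refine ⟨fun h => isConj_of_card_orbits_pow_eq fun m => ?_, isConj_permMatrix⟩
  have hrank := Matrix.rank_eq_of_isConj (h.pow m).sub_one
  rw [← permMatrix_pow, ← permMatrix_pow] at hrank
  have hσ := rank_permMatrix_sub_one_add_card_orbits k (σ ^ m)
  have hτ := rank_permMatrix_sub_one_add_card_orbits k (τ ^ m)
  omega
end

section
/- Let k be a field, n a natural number, and σ, τ : Equiv.Perm (Fin n) permutations. If the permutation matrices P_σ and P_τ over k are similar (there exists an invertible n×n matrix M over k with M * P_σ * M⁻¹ = P_τ), then σ and τ have the same number of fixed points: Nat.card {i : Fin n | σ i = i} = Nat.card {i : Fin n | τ i = i}. -/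
/-!
Over any field the kernel of `P_ρ - 1` consists of the vectors that are constant on the cycles
of `ρ`, so similar permutation matrices `P_σ ~ P_τ` force `σ ^ d` and `τ ^ d` to have the same
number of cycles for every `d` (the traces only give the numbers of fixed points modulo the
characteristic). Burnside's lemma for the cyclic group of order `K` generated by `ρ` reads
`K · #cycles(ρ) = φ(K) · #Fix(ρ) + ∑_{x < K, gcd(x, K) ≠ 1} #Fix(ρ ^ x)`, and every `ρ ^ x` in
the sum has order smaller than `K`; strong induction on the order recovers `#Fix(σ ^ d)` from
the cycle counts.
-/

open Function

theorem orderOf_pow_lt_of_not_coprime {G : Type*} [Monoid G] {g : G} (hg : IsOfFinOrder g)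
    {x : ℕ} (h : ¬(orderOf g).Coprime x) : orderOf (g ^ x) < orderOf g := by
  rw [hg.orderOf_pow]
  exact Nat.div_lt_self hg.orderOf_pos
    (lt_of_le_of_ne (Nat.gcd_pos_of_pos_left _ hg.orderOf_pos) (Ne.symm h))

namespace Matrix

variable {α : Type*} [Fintype α] [DecidableEq α]

theorem rank_eq_of_isConj_s12 {R : Type*} [CommRing R] {A B : Matrix α α R} (h : IsConj A B) :
    A.rank = B.rank := by
  obtain ⟨c, hc⟩ := h
  have hdet : IsUnit (c : Matrix α α R).det := (isUnit_iff_isUnit_det _).mp c.isUnit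
  have hrank := congrArg rank hc.eq
  rwa [rank_mul_eq_right_of_isUnit_det _ _ hdet, rank_mul_eq_left_of_isUnit_det _ _ hdet] at hrank

theorem permMatrix_pow {R : Type*} [Semiring R] (ρ : Equiv.Perm α) (d : ℕ) :
    (ρ ^ d).permMatrix R = ρ.permMatrix R ^ d := by
  induction d with
  | zero => simp
  | succ d ih => rw [pow_succ, permMatrix_mul, ih, pow_succ']

end Matrix

namespace Equiv.Perm

variable {α : Type*}

-- Fixed points count as cycles of length one, unlike in `cycleType`.
noncomputable def numCycles (ρ : Perm α) : ℕ := Nat.card (Quotient (SameCycle.setoid ρ))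

theorem numCycles_eq_card_iff [Finite α] {ρ : Perm α} : ρ.numCycles = Nat.card α ↔ ρ = 1 := by
  constructor
  · intro h
    have hinj : Injective (Quotient.mk (SameCycle.setoid ρ)) :=
      (Quotient.mk_surjective.bijective_of_nat_card_le h.ge).injective
    ext x
    exact hinj (Quotient.sound (sameCycle_apply_left.mpr (SameCycle.refl ρ x)))
  · rintro rfl
    exact (Nat.card_congr (Equiv.ofBijective _
      ⟨fun x y hxy => sameCycle_one.mp (Quotient.exact hxy), Quotient.mk_surjective⟩)).symm

theorem orderOf_eq_of_numCycles_pow_eq [Finite α] {σ τ : Perm α}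
    (h : ∀ d : ℕ, (σ ^ d).numCycles = (τ ^ d).numCycles) : orderOf σ = orderOf τ :=
  orderOf_eq_orderOf_iff.mpr fun d => by rw [← numCycles_eq_card_iff, h, numCycles_eq_card_iff]

theorem fixedPoints_pow_of_coprime {ρ : Perm α} {x : ℕ} (h : x.Coprime (orderOf ρ)) :
    fixedPoints ⇑(ρ ^ x) = fixedPoints ρ := by
  obtain ⟨m, hm⟩ := exists_pow_eq_self_of_coprime h
  ext a
  refine ⟨fun ha => ?_, fun ha => pow_apply_eq_self_of_apply_eq_self ha x⟩
  rw [← hm]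
  exact pow_apply_eq_self_of_apply_eq_self ha m

theorem sum_card_fixedPoints_pow [Finite α] (ρ : Perm α) :
    ∑ x ∈ Finset.range (orderOf ρ), Nat.card (fixedPoints ⇑(ρ ^ x)) =
      orderOf ρ * ρ.numCycles := by
  classical
  have := Fintype.ofFinite α
  have hrel : MulAction.orbitRel (Subgroup.zpowers ρ) α = SameCycle.setoid ρ := by
    ext x y
    rw [MulAction.orbitRel_apply, MulAction.mem_orbit_iff, Setoid.comm']
    constructor
    · rintro ⟨⟨_, i, rfl⟩, hi⟩
      exact ⟨i, hi⟩
    · rintro ⟨i, hi⟩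
      exact ⟨⟨ρ ^ i, i, rfl⟩, hi⟩
  have hburnside :=
    MulAction.sum_card_fixedBy_eq_card_orbits_mul_card_group (Subgroup.zpowers ρ) α
  simp only [Fintype.card_eq_nat_card, Nat.card_zpowers] at hburnside
  rw [← Fin.sum_univ_eq_sum_range, mul_comm, numCycles, ← hrel, ← hburnside,
    ← (finEquivZPowers (isOfFinOrder_of_finite ρ)).sum_comp]
  simp only [finEquivZPowers_apply]
  rfl

open Nat in
theorem orderOf_mul_numCycles_eq_totient_mul_add [Finite α] (ρ : Perm α) :
    orderOf ρ * ρ.numCycles = φ (orderOf ρ) * Nat.card (fixedPoints ρ) +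
      ∑ x ∈ (Finset.range (orderOf ρ)).filter (¬(orderOf ρ).Coprime ·),
        Nat.card (fixedPoints ⇑(ρ ^ x)) := by
  rw [← sum_card_fixedPoints_pow,
    ← Finset.sum_filter_add_sum_filter_not _ ((orderOf ρ).Coprime ·),
    totient_eq_card_coprime, ← smul_eq_mul, ← Finset.sum_const]
  congr 1
  refine Finset.sum_congr rfl fun x hx => ?_
  rw [fixedPoints_pow_of_coprime (Finset.mem_filter.mp hx).2.symm]

theorem card_fixedPoints_pow_eq_of_numCycles_pow_eq [Finite α] {σ τ : Perm α}
    (h : ∀ d : ℕ, (σ ^ d).numCycles = (τ ^ d).numCycles) (d : ℕ) :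
    Nat.card (fixedPoints ⇑(σ ^ d)) = Nat.card (fixedPoints ⇑(τ ^ d)) := by
  induction hK : orderOf (σ ^ d) using Nat.strong_induction_on generalizing d with
  | _ K ih =>
  have hord : orderOf (τ ^ d) = K :=
    hK ▸ (orderOf_eq_of_numCycles_pow_eq fun e => by simp only [← pow_mul, h]).symm
  have hσ := orderOf_mul_numCycles_eq_totient_mul_add (σ ^ d)
  have hτ := orderOf_mul_numCycles_eq_totient_mul_add (τ ^ d)
  have hsmaller : ∀ x ∈ (Finset.range K).filter (¬K.Coprime ·),
      Nat.card (fixedPoints ⇑((σ ^ d) ^ x)) = Nat.card (fixedPoints ⇑((τ ^ d) ^ x)) := by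
    intro x hx
    have hlt := orderOf_pow_lt_of_not_coprime (isOfFinOrder_of_finite (σ ^ d))
      (hK ▸ (Finset.mem_filter.mp hx).2)
    simp only [← pow_mul] at hlt ⊢
    exact ih _ (hK ▸ hlt) _ rfl
  rw [hK, h d, Finset.sum_congr rfl hsmaller] at hσ
  rw [hord] at hτ
  have hpos : 0 < K.totient := Nat.totient_pos.mpr (hK ▸ (isOfFinOrder_of_finite _).orderOf_pos)
  exact Nat.eq_of_mul_eq_mul_left hpos (by omega)

end Equiv.Perm

namespace Matrix

variable {α : Type*} [Fintype α] [DecidableEq α] {k : Type*} [Field k]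

theorem ker_mulVecLin_permMatrix_sub_one (ρ : Equiv.Perm α) :
    LinearMap.ker (ρ.permMatrix k - 1).mulVecLin =
      LinearMap.range (LinearMap.funLeft k k (Quotient.mk (Equiv.Perm.SameCycle.setoid ρ))) := by
  ext v
  rw [LinearMap.mem_ker, mulVecLin_apply, sub_mulVec, permMatrix_mulVec, one_mulVec, sub_eq_zero,
    LinearMap.mem_range]
  constructor
  · intro hv
    refine ⟨Quotient.lift v fun x y hxy => ?_, rfl⟩
    obtain ⟨i, -, rfl⟩ := Equiv.Perm.SameCycle.exists_pow_eq' hxy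
    rw [Equiv.Perm.coe_pow]
    exact (congrFun (iterate_invariant hv i) x).symm
  · rintro ⟨w, rfl⟩
    funext x
    exact congrArg w (Quotient.sound
      (Equiv.Perm.sameCycle_apply_left.mpr (Equiv.Perm.SameCycle.refl ρ x)))

theorem rank_permMatrix_sub_one_add_numCycles (ρ : Equiv.Perm α) :
    (ρ.permMatrix k - 1).rank + ρ.numCycles = Fintype.card α := by
  have hinj := LinearMap.funLeft_injective_of_surjective k k _
    (Quotient.mk_surjective (s := Equiv.Perm.SameCycle.setoid ρ))
  have hdim := LinearMap.finrank_range_add_finrank_ker (ρ.permMatrix k - 1).mulVecLin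
  have := Fintype.ofFinite (Quotient (Equiv.Perm.SameCycle.setoid ρ))
  rwa [ker_mulVecLin_permMatrix_sub_one, LinearMap.finrank_range_of_inj hinj,
    Module.finrank_fintype_fun_eq_card, Module.finrank_fintype_fun_eq_card,
    ← Nat.card_eq_fintype_card] at hdim

theorem numCycles_pow_eq_of_isConj_permMatrix {σ τ : Equiv.Perm α}
    (h : IsConj (σ.permMatrix k) (τ.permMatrix k)) (d : ℕ) :
    (σ ^ d).numCycles = (τ ^ d).numCycles := by
  have hrank : ((σ ^ d).permMatrix k - 1).rank = ((τ ^ d).permMatrix k - 1).rank := by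
    obtain ⟨c, hc⟩ := h.pow d
    rw [permMatrix_pow, permMatrix_pow]
    exact rank_eq_of_isConj_s12 ⟨c, hc.sub_right (SemiconjBy.one_right _)⟩
  have hσ := rank_permMatrix_sub_one_add_numCycles (k := k) (σ ^ d)
  have hτ := rank_permMatrix_sub_one_add_numCycles (k := k) (τ ^ d)
  omega

end Matrix

/-- If the permutation matrices of `σ` and `τ` over a field `k` are similar, then `σ` and `τ`
have the same number of fixed points. -/
theorem fixedPoints_card_eq_of_permMatrix_similar
    (k : Type) [Field k] (n : ℕ) (σ τ : Equiv.Perm (Fin n))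
    (h : ∃ M : Matrix (Fin n) (Fin n) k, IsUnit M ∧
      M * σ.permMatrix k * M⁻¹ = τ.permMatrix k) :
    Nat.card {i : Fin n | σ i = i} = Nat.card {i : Fin n | τ i = i} := by
  obtain ⟨M, ⟨u, rfl⟩, hM⟩ := h
  have hconj : IsConj (σ.permMatrix k) (τ.permMatrix k) := by
    refine ⟨u, ?_⟩
    rwa [← Matrix.coe_units_inv, Units.mul_inv_eq_iff_eq_mul] at hM
  have hfix := Equiv.Perm.card_fixedPoints_pow_eq_of_numCycles_pow_eq
    (Matrix.numCycles_pow_eq_of_isConj_permMatrix hconj) 1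
  rwa [pow_one, pow_one] at hfix
end

section
/- Let k be a field, V a finite-dimensional k-vector space, and P an invertible linear endomorphism of V. Then P is represented by a permutation matrix in some basis (i.e., there exists a basis b of V such that P permutes the set of basis vectors) if and only if the representation of Multiplicative ℤ on V in which the generator acts by P is isomorphic in Rep k (Multiplicative ℤ) to a finite direct sum ⊕ᵢ M(nᵢ) for some positive integers n₁, …, n_r. -/
open CategoryTheory CategoryTheory.Limits

/-- The representation of `Multiplicative ℤ` on `V` in which the integer `a` acts by the
`a`-th power of the invertible linear endomorphism `P`. -/
noncomputable def repOf (k : Type) [Field k] (V : Type) [AddCommGroup V] [Module k V]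
    (P : V ≃ₗ[k] V) : Rep k (Multiplicative ℤ) :=
  Rep.of
    ((LinearEquiv.automorphismGroup.toLinearMapMonoidHom).comp
      (zpowersHom (V ≃ₗ[k] V) P))

/-!
A basis permuted by `P` is the same thing as an isomorphism of the representation with the
permutation representation of a permutation `σ` of a finite set `ι` (transport the standard
basis of `ι → k`). On each of its orbits, `σ` is the translation `i ↦ i + 1` of `ZMod n`, with
`n` the length of the orbit, and the permutation representation of a disjoint union is the
direct sum of those of the pieces; so permutation representations are exactly the finite
direct sums of the `M n` with `n > 0`.
-/

open Multiplicative

universe u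

variable {k : Type u} [CommRing k] {W W' : Type u} [AddCommGroup W] [Module k W]
  [AddCommGroup W'] [Module k W']

namespace Representation

noncomputable def zpowers (e : W ≃ₗ[k] W) : Representation k (Multiplicative ℤ) W :=
  LinearEquiv.automorphismGroup.toLinearMapMonoidHom.comp (zpowersHom _ e)

@[simp]
theorem zpowers_ofAdd_one (e : W ≃ₗ[k] W) : zpowers e (ofAdd 1) = e := by
  simp [zpowers, zpowersHom_apply]

end Representation

theorem LinearMap.comp_zpow_of_comp {e : W ≃ₗ[k] W} {e' : W' ≃ₗ[k] W'} {f : W →ₗ[k] W'}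
    (h : f ∘ₗ e = e' ∘ₗ f) (n : ℤ) :
    f ∘ₗ (e ^ n : W ≃ₗ[k] W) = (e' ^ n : W' ≃ₗ[k] W') ∘ₗ f := by
  have comp_pow {e : W ≃ₗ[k] W} {e' : W' ≃ₗ[k] W'} (h : f ∘ₗ e = e' ∘ₗ f)
      (m : ℕ) : f ∘ₗ (e ^ m : W ≃ₗ[k] W) = (e' ^ m : W' ≃ₗ[k] W') ∘ₗ f := by
    simpa only [← LinearEquiv.automorphismGroup.toLinearMapMonoidHom_apply, map_pow] using
      (Module.End.commute_pow_left_of_commute h.symm m).symm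
  have comp_symm : f ∘ₗ e.symm = e'.symm ∘ₗ f := by
    ext w
    apply e'.injective
    simpa using (LinearMap.congr_fun h (e.symm w)).symm
  obtain ⟨m, rfl | rfl⟩ := Int.eq_nat_or_neg n
  · exact_mod_cast comp_pow h m
  · rw [zpow_neg, zpow_natCast, ← inv_pow, zpow_neg, zpow_natCast, ← inv_pow]
    exact comp_pow comp_symm m

namespace Rep

section Semiconj

variable {e : W ≃ₗ[k] W} {e' : W' ≃ₗ[k] W'}

noncomputable def homOfSemiconj (f : W →ₗ[k] W') (h : f ∘ₗ e = e' ∘ₗ f) :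
    of (Representation.zpowers e) ⟶ of (Representation.zpowers e') :=
  ofHom ⟨f, fun g => LinearMap.comp_zpow_of_comp h g.toAdd⟩

@[simp]
theorem homOfSemiconj_hom_toLinearMap (f : W →ₗ[k] W') (h : f ∘ₗ e = e' ∘ₗ f) :
    (homOfSemiconj f h).hom.toLinearMap = f :=
  rfl

noncomputable def isoOfSemiconj (f : W ≃ₗ[k] W')
    (h : f.toLinearMap ∘ₗ e = e' ∘ₗ f.toLinearMap) :
    of (Representation.zpowers e) ≅ of (Representation.zpowers e') :=
  mkIso (.mk f fun g => LinearMap.comp_zpow_of_comp h g.toAdd)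

end Semiconj

/-- The generator sends the basis vector `Pi.single i 1` to `Pi.single (σ i) 1`. -/
noncomputable abbrev ofPerm (k : Type u) [CommRing k] {ι : Type u} (σ : Equiv.Perm ι) :
    Rep k (Multiplicative ℤ) :=
  of (Representation.zpowers (LinearEquiv.funCongrLeft k k σ.symm))

noncomputable def ofPermIsoOfSemiconj {ι κ : Type u} {σ : Equiv.Perm ι} {τ : Equiv.Perm κ}
    (E : ι ≃ κ) (h : ∀ x, E (σ x) = τ (E x)) : ofPerm k σ ≅ ofPerm k τ :=
  isoOfSemiconj (LinearEquiv.funCongrLeft k k E.symm) <| by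
    have h_symm (x : κ) : σ.symm (E.symm x) = E.symm (τ.symm x) := by
      rw [Equiv.symm_apply_eq, Equiv.symm_apply_eq, h, Equiv.apply_symm_apply,
        Equiv.apply_symm_apply]
    ext f x
    simp [LinearEquiv.funCongrLeft_apply, h_symm]

section Sigma

variable {J : Type u} [DecidableEq J] {κ : J → Type u} (τ : ∀ j, Equiv.Perm (κ j))

variable (k) in
noncomputable def sigmaBicone : Bicone fun j => ofPerm k (τ j) where
  pt := ofPerm k (Equiv.sigmaCongrRight τ)
  π j := homOfSemiconj
      (LinearMap.proj j ∘ₗ (LinearEquiv.piCurry k fun _ _ => k).toLinearMap) <| by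
    ext f x
    simp [LinearEquiv.funCongrLeft_apply, Sigma.curry, Equiv.sigmaCongrRight]
  ι j := homOfSemiconj ((LinearEquiv.piCurry k fun _ _ => k).symm.toLinearMap ∘ₗ
      LinearMap.single k (fun j => κ j → k) j) <| by
    ext g ⟨l, y⟩
    by_cases h : j = l
    · subst h
      simp [LinearEquiv.funCongrLeft_apply, Sigma.uncurry, Equiv.sigmaCongrRight]
    · simp [LinearEquiv.funCongrLeft_apply, Sigma.uncurry, h]
  ι_π j j' := by
    ext1
    apply Representation.IntertwiningMap.ext
    rw [hom_comp, Representation.IntertwiningMap.comp_toLinearMap,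
      homOfSemiconj_hom_toLinearMap, homOfSemiconj_hom_toLinearMap]
    by_cases h : j = j'
    · subst h
      simp [LinearMap.comp_assoc, LinearMap.proj_comp_single_same]
    · simpa [LinearMap.comp_assoc, h] using LinearMap.proj_comp_single_ne k _ j' j (Ne.symm h)

theorem sigmaBicone_total [Fintype J] :
    ∑ j, (sigmaBicone k τ).π j ≫ (sigmaBicone k τ).ι j = 𝟙 (sigmaBicone k τ).pt := by
  let e := LinearEquiv.piCurry k fun (j : J) (_ : κ j) => k
  have sum_single_proj : ∑ j, (e.symm.toLinearMap ∘ₗ LinearMap.single k _ j) ∘ₗ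
      (LinearMap.proj j ∘ₗ e.toLinearMap) = LinearMap.id := by
    ext f : 1
    simp only [LinearMap.sum_apply, LinearMap.comp_apply, LinearMap.coe_single,
      LinearMap.coe_proj, LinearEquiv.coe_coe, Function.eval]
    rw [← map_sum, Finset.univ_sum_single, LinearEquiv.symm_apply_apply, LinearMap.id_apply]
  ext1
  apply Representation.IntertwiningMap.ext
  rw [sum_hom, Representation.IntertwiningMap.toLinearMap_sum]
  exact sum_single_proj

noncomputable def ofPermSigmaIsoBiproduct [Fintype J] [HasBiproduct fun j => ofPerm k (τ j)] :
    ofPerm k (Equiv.sigmaCongrRight τ) ≅ ⨁ fun j => ofPerm k (τ j) :=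
  biproduct.uniqueUpToIso _ (isBilimitOfTotal _ (sigmaBicone_total τ))

end Sigma

end Rep

section Basis

variable {V : Type u} [AddCommGroup V] [Module k V] {ι : Type u} [Finite ι]

theorem Module.Basis.apply_perm_iff_equivFun_comp (b : Module.Basis ι k V) (P : V →ₗ[k] V)
    (σ : Equiv.Perm ι) :
    (∀ i, P (b i) = b (σ i)) ↔ b.equivFun.toLinearMap ∘ₗ P =
      (LinearEquiv.funCongrLeft k k σ.symm).toLinearMap ∘ₗ b.equivFun := by
  classical
  have apply_iff (i : ι) : P (b i) = b (σ i) ↔ (b.equivFun.toLinearMap ∘ₗ P) (b i) =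
      ((LinearEquiv.funCongrLeft k k σ.symm).toLinearMap ∘ₗ b.equivFun) (b i) := by
    rw [← b.equivFun.injective.eq_iff, funext_iff, funext_iff]
    simp only [LinearMap.comp_apply, LinearEquiv.coe_coe, LinearEquiv.funCongrLeft_apply,
      LinearMap.funLeft_apply, Module.Basis.equivFun_self, Equiv.eq_symm_apply]
  simp_rw [apply_iff]
  exact ⟨b.ext, fun h i => LinearMap.congr_fun h (b i)⟩

theorem exists_basis_apply_perm_iff_nonempty_iso (P : V ≃ₗ[k] V) (σ : Equiv.Perm ι) :
    (∃ b : Module.Basis ι k V, ∀ i, P (b i) = b (σ i)) ↔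
      Nonempty (Rep.of (Representation.zpowers P) ≅ Rep.ofPerm k σ) := by
  constructor
  · rintro ⟨b, hb⟩
    exact ⟨Rep.isoOfSemiconj b.equivFun ((b.apply_perm_iff_equivFun_comp P σ).mp hb)⟩
  · rintro ⟨i⟩
    let e : V ≃ₗ[k] (ι → k) := (Representation.equivOfIso i).toLinearEquiv
    refine ⟨.ofEquivFun e,
      ((Module.Basis.ofEquivFun e).apply_perm_iff_equivFun_comp P σ).mpr ?_⟩
    rw [Module.Basis.equivFun_ofEquivFun]
    simpa only [Representation.zpowers_ofAdd_one] using
      (Representation.equivOfIso i).isIntertwining' (ofAdd 1)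

end Basis

theorem Equiv.Perm.exists_equiv_sigma_zmod {ι : Type u} [Finite ι] (σ : Equiv.Perm ι) :
    ∃ (r : ℕ) (d : Fin r → ℕ) (_ : ∀ i, NeZero (d i)) (E : ι ≃ Σ i, ZMod (d i)),
      ∀ x, E (σ x) = ⟨(E x).1, (E x).2 + 1⟩ := by
  let Ω := MulAction.orbitRel.Quotient (Subgroup.zpowers σ) ι
  let n (ω : Ω) := Function.minimalPeriod (σ • ·) ω.out
  let E : ι ≃ Σ ω : Ω, ZMod (n ω) :=
    (MulAction.selfEquivSigmaOrbits (Subgroup.zpowers σ) ι).trans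
      (Equiv.sigmaCongrRight fun ω => MulAction.orbitZPowersEquiv σ ω.out)
  have symm_E (ω : Ω) (m : ℤ) : E.symm ⟨ω, m⟩ = (σ ^ m) ω.out :=
    congrArg Subtype.val (MulAction.orbitZPowersEquiv_symm_apply' σ ω.out m)
  have E_apply (x : ι) : E (σ x) = ⟨(E x).1, (E x).2 + 1⟩ := by
    obtain ⟨⟨ω, m⟩, rfl⟩ := E.symm.surjective x
    rw [E.apply_symm_apply, ← Equiv.eq_symm_apply, ← ZMod.intCast_zmod_cast m, ← Int.cast_one,
      ← Int.cast_add, symm_E, symm_E, add_comm, zpow_add, zpow_one, Equiv.Perm.mul_apply]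
  clear_value E
  obtain ⟨r, ⟨e⟩⟩ := Finite.exists_equiv_fin Ω
  let F := Equiv.sigmaCongrLeft (β := fun ω => ZMod (n ω)) e.symm
  have symm_F (i : Fin r) (m : ZMod (n (e.symm i))) :
      F.symm ⟨e.symm i, m⟩ = (⟨i, m⟩ : Σ j, ZMod (n (e.symm j))) := by
    rw [Equiv.symm_apply_eq]
    rfl
  refine ⟨r, fun i => n (e.symm i), fun i => MulAction.minimalPeriod_pos σ _, E.trans F.symm,
    fun x => ?_⟩
  rw [Equiv.trans_apply, Equiv.trans_apply, E_apply]
  obtain ⟨ω, m⟩ := E x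
  obtain ⟨i, rfl⟩ := e.symm.surjective ω
  rw [symm_F, symm_F]

theorem repOf_eq (k : Type) [Field k] (V : Type) [AddCommGroup V] [Module k V]
    (P : V ≃ₗ[k] V) : repOf k V P = Rep.of (Representation.zpowers P) :=
  rfl

/-- `M k n` is by definition `Rep.ofPerm k (Equiv.subRight 1).symm`. -/
noncomputable def M.isoOfPerm (k : Type) [Field k] (n : ℕ) :
    M k n ≅ Rep.ofPerm k (Equiv.addRight (1 : ZMod n)) :=
  Rep.ofPermIsoOfSemiconj (σ := (Equiv.subRight (1 : ZMod n)).symm) (Equiv.refl _) fun _ => by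
    simp

noncomputable def M.biproductIsoOfPerm (k : Type) [Field k] {r : ℕ} (d : Fin r → ℕ) :
    (⨁ fun i => M k (d i)) ≅
      Rep.ofPerm k (Equiv.sigmaCongrRight fun i => Equiv.addRight (1 : ZMod (d i))) :=
  biproduct.mapIso (fun i => M.isoOfPerm k (d i)) ≪≫ (Rep.ofPermSigmaIsoBiproduct _).symm

theorem permutes_basis_iff_iso_biproduct_M_general
    (k : Type) [Field k] (V : Type) [AddCommGroup V] [Module k V]
    (P : V ≃ₗ[k] V) :
    (∃ (ι : Type) (_ : Fintype ι) (b : Module.Basis ι k V) (σ : Equiv.Perm ι),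
        ∀ i, P (b i) = b (σ i)) ↔
      ∃ (r : ℕ) (d : Fin r → ℕ), (∀ i, 0 < d i) ∧
        Nonempty (repOf k V P ≅ ⨁ fun i => M k (d i)) := by
  rw [repOf_eq]
  constructor
  · rintro ⟨ι, _, b, σ, hb⟩
    obtain ⟨r, d, _, E, hE⟩ := σ.exists_equiv_sigma_zmod
    obtain ⟨iso⟩ := (exists_basis_apply_perm_iff_nonempty_iso P σ).mp ⟨b, hb⟩
    exact ⟨r, d, fun i => NeZero.pos _,
      ⟨iso ≪≫ Rep.ofPermIsoOfSemiconj E hE ≪≫ (M.biproductIsoOfPerm k d).symm⟩⟩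
  · rintro ⟨r, d, hd, ⟨iso⟩⟩
    have (i : Fin r) : NeZero (d i) := ⟨(hd i).ne'⟩
    obtain ⟨b, hb⟩ :=
      (exists_basis_apply_perm_iff_nonempty_iso P _).mpr ⟨iso ≪≫ M.biproductIsoOfPerm k d⟩
    exact ⟨_, inferInstance, b, _, hb⟩

/-- An invertible linear endomorphism `P` of a finite-dimensional vector space `V` is
represented by a permutation matrix in some basis (i.e. `P` permutes the vectors of some
basis of `V`) if and only if the corresponding representation of `Multiplicative ℤ` on `V`
decomposes as a finite direct sum `⊕ᵢ M(nᵢ)` with all `nᵢ` positive. -/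
theorem permutes_basis_iff_iso_biproduct_M
    (k : Type) [Field k] (V : Type) [AddCommGroup V] [Module k V] [FiniteDimensional k V]
    (P : V ≃ₗ[k] V) :
    (∃ (ι : Type) (_ : Fintype ι) (b : Module.Basis ι k V) (σ : Equiv.Perm ι),
        ∀ i, P (b i) = b (σ i)) ↔
      ∃ (r : ℕ) (d : Fin r → ℕ), (∀ i, 0 < d i) ∧
        Nonempty (repOf k V P ≅ ⨁ fun i => M k (d i)) :=
  permutes_basis_iff_iso_biproduct_M_general k V P
end

section
/- Let G₁ = Q₈ × C₂ be the direct product of the quaternion group of order 8 with the cyclic group of order 2, and let G₂ be the semidirect product of a cyclic group of order 4 by a cyclic group of order 4 in which the acting generator acts by inversion (i.e., G₂ = ⟨x, y | x⁴ = y⁴ = 1, y x y⁻¹ = x⁻¹⟩). Then for every positive integer n, the number of elements of order n in G₁ equals the number of elements of order n in G₂, yet G₁ and G₂ are not isomorphic as groups. -/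
/-- The homomorphism from `Multiplicative (ZMod n)` to a group `G` sending the generator to
an element `g` with `g ^ n = 1`. -/
def cyclicHom (n : ℕ) [NeZero n] {G : Type*} [Group G] (g : G) (hg : g ^ n = 1) :
    Multiplicative (ZMod n) →* G where
  toFun a := g ^ (a.toAdd.val)
  map_one' := by simp
  map_mul' x y := by
    have key : ∀ m : ℕ, g ^ (m % n) = g ^ m := fun m => by
      conv_rhs => rw [← Nat.mod_add_div m n, pow_add, pow_mul, hg, one_pow, mul_one]
    show g ^ ((x.toAdd + y.toAdd).val) = _
    rw [ZMod.val_add, key, pow_add]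

/-- The inversion automorphism of `Multiplicative (ZMod 4)`. -/
def invAut : MulAut (Multiplicative (ZMod 4)) := MulEquiv.inv (Multiplicative (ZMod 4))

lemma invAut_pow_four : invAut ^ 4 = 1 := by
  have h2 : invAut ^ 2 = 1 := by
    ext x
    simp [invAut, sq]
  have h4 : invAut ^ 4 = (invAut ^ 2) ^ 2 := by rw [← pow_mul]
  rw [h4, h2, one_pow]

/-- The action of `Multiplicative (ZMod 4)` on itself in which the generator acts by
inversion. -/
def φ : Multiplicative (ZMod 4) →* MulAut (Multiplicative (ZMod 4)) :=
  cyclicHom 4 invAut invAut_pow_four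

/-- `G₂ = ⟨x, y | x⁴ = y⁴ = 1, y x y⁻¹ = x⁻¹⟩`. -/
abbrev G₂ := SemidirectProduct (Multiplicative (ZMod 4)) (Multiplicative (ZMod 4)) φ

/-- `G₁ = Q₈ × C₂`. -/
abbrev G₁ := QuaternionGroup 2 × Multiplicative (ZMod 2)
/-!
Counting the solutions of `g ^ d = 1` by the order of `g` gives
`#{g | g ^ d = 1} = ∑ e ∣ d, #{g | orderOf g = e}`, so by induction over divisors the order
statistics of a finite group are determined by the numbers of solutions of `g ^ d = 1`. When
`g ^ 4 = 1` holds identically, `g ^ d = 1` is equivalent to `g ^ gcd(d, 4) = 1`, so these numbers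
only depend on the order of the group and on the number of solutions of `g ^ 2 = 1`; both groups
have order 16 and four such solutions. They are told apart by their squares: `1` and `(-1, 1)`
in `Q₈ × C₂`, but `1`, `x²` and `y²` in `G₂`.
-/

open Finset

section OrderStatistics

variable {G H : Type*} [Group G] [Group H]

lemma card_orderOf_eq_of_card_pow_eq_one_eq [Finite G] [Finite H]
    (h : ∀ d ≠ 0, Nat.card {g : G | g ^ d = 1} = Nat.card {g : H | g ^ d = 1}) (n : ℕ) :
    Nat.card {g : G | orderOf g = n} = Nat.card {g : H | orderOf g = n} := by
  classical
  have := Fintype.ofFinite G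
  have := Fintype.ofFinite H
  simp only [Nat.card_eq_fintype_card, Fintype.card_subtype, Set.mem_ofPred_eq] at h ⊢
  induction n using Nat.strong_induction_on with
  | _ n ih =>
    rcases eq_or_ne n 0 with rfl | hn
    · simp [(orderOf_pos _).ne']
    · have hG := sum_card_orderOf_eq_card_pow_eq_one (G := G) hn
      have hH := sum_card_orderOf_eq_card_pow_eq_one (G := H) hn
      rw [← Nat.cons_self_properDivisors hn, sum_cons] at hG hH
      have hproper : ∑ m ∈ n.properDivisors, #{x : G | orderOf x = m} =
          ∑ m ∈ n.properDivisors, #{x : H | orderOf x = m} :=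
        sum_congr rfl fun m hm => ih m (Nat.mem_properDivisors.1 hm).2
      have := h n hn
      omega

lemma setOf_pow_eq_one_eq_gcd (hG : ∀ g : G, g ^ 4 = 1) (d : ℕ) :
    {g : G | g ^ d = 1} = {g | g ^ d.gcd 4 = 1} := by
  ext g
  simp only [Set.mem_ofPred_eq, ← orderOf_dvd_iff_pow_eq_one, Nat.dvd_gcd_iff,
    orderOf_dvd_of_pow_eq_one (hG g), and_true]

lemma card_pow_eq_one_eq_of_pow_four_eq_one (hG : ∀ g : G, g ^ 4 = 1) (hH : ∀ h : H, h ^ 4 = 1)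
    (hcard : Nat.card G = Nat.card H)
    (hsq : Nat.card {g : G | g ^ 2 = 1} = Nat.card {h : H | h ^ 2 = 1}) (d : ℕ) :
    Nat.card {g : G | g ^ d = 1} = Nat.card {h : H | h ^ d = 1} := by
  rw [setOf_pow_eq_one_eq_gcd hG, setOf_pow_eq_one_eq_gcd hH]
  have hd : d.gcd 4 ∈ Nat.divisors 4 := Nat.mem_divisors.2 ⟨Nat.gcd_dvd_right _ _, by norm_num⟩
  simp only [show Nat.divisors 4 = {1, 2, 4} by decide, mem_insert, mem_singleton] at hd
  rcases hd with hd | hd | hd <;> rw [hd]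
  · simp
  · exact hsq
  · simpa [hG, hH] using hcard

lemma MulEquiv.card_range_sq_eq (e : G ≃* H) :
    Nat.card (Set.range fun g : G => g ^ 2) = Nat.card (Set.range fun h : H => h ^ 2) := by
  have hrange : (Set.range fun h : H => h ^ 2) = e '' Set.range fun g : G => g ^ 2 := by
    rw [← e.surjective.range_comp, ← Set.range_comp]
    simp [Function.comp_def]
  rw [hrange, Nat.card_image_of_injective e.injective]

end OrderStatistics

instance : Fintype G₂ := Fintype.ofEquiv _ SemidirectProduct.equivProd.symm

lemma G₁.pow_four_eq_one : ∀ g : G₁, g ^ 4 = 1 := by decide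

lemma G₂.pow_four_eq_one : ∀ g : G₂, g ^ 4 = 1 := by decide

lemma G₁.card : Nat.card G₁ = 16 := by simp [QuaternionGroup.card]

lemma G₂.card : Nat.card G₂ = 16 := by
  rw [Nat.card_eq_fintype_card]; rfl

lemma G₁.card_sq_eq_one : Nat.card {g : G₁ | g ^ 2 = 1} = 4 := by
  rw [Nat.card_eq_fintype_card]; decide

lemma G₂.card_sq_eq_one : Nat.card {g : G₂ | g ^ 2 = 1} = 4 := by
  rw [Nat.card_eq_fintype_card]; decide

lemma G₁.card_range_sq : Nat.card (Set.range fun g : G₁ => g ^ 2) = 2 := by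
  rw [Nat.card_eq_fintype_card]; decide

lemma G₂.card_range_sq : Nat.card (Set.range fun g : G₂ => g ^ 2) = 3 := by
  rw [Nat.card_eq_fintype_card]; decide

/-- For every positive integer `n`, the groups `G₁ = Q₈ × C₂` and
`G₂ = ⟨x, y | x⁴ = y⁴ = 1, y x y⁻¹ = x⁻¹⟩` have the same number of elements of order `n`,
yet `G₁` and `G₂` are not isomorphic. -/
theorem G₁_G₂_same_order_statistics_not_isomorphic :
    (∀ n : ℕ, 0 < n →
      Nat.card {g : G₁ | orderOf g = n} = Nat.card {g : G₂ | orderOf g = n}) ∧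
      IsEmpty (G₁ ≃* G₂) := by
  refine ⟨fun n _ => card_orderOf_eq_of_card_pow_eq_one_eq (fun d _ => ?_) n, ⟨fun e => ?_⟩⟩
  · exact card_pow_eq_one_eq_of_pow_four_eq_one G₁.pow_four_eq_one G₂.pow_four_eq_one
      (G₁.card.trans G₂.card.symm) (G₁.card_sq_eq_one.trans G₂.card_sq_eq_one.symm) d
  · have hsquares := e.card_range_sq_eq
    rw [G₁.card_range_sq, G₂.card_range_sq] at hsquares
    omega
end
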